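/- arXiv:2403.16147 — 2 statements merged into one kernel-verified Lean document; each statement's English description precedes it below -/
import Mathlib

section
/- Let G be an open subgroup of GL(2, Ẑ), let M be the product of the primes dividing the level of the commutator subgroup [G,G] ⊆ SL(2, Ẑ), and define 𝒢 := (Z_M^× · G_M) × ∏_{ℓ ∤ M} GL(2, Z_ℓ), where G_M is the image of G under projection to GL(2, Z_M). Then G ⊆ 𝒢 and [G,G] = [𝒢,𝒢]. -/
/-! ## `GL(2, Ẑ)` via `Ẑ ≅ ∏_p ℤ_p`, levels, and the agreeable closure -/

instance (p : Nat.Primes) : Fact p.1.Prime := ⟨p.2⟩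

/-- `GL(2, Ẑ) = ∏_p GL(2, ℤ_p)`. -/
abbrev GL2Zhat : Type := Π p : Nat.Primes, GL (Fin 2) ℤ_[p.1]

/-- `SL(2, Ẑ)`: the subgroup of `GL(2, Ẑ)` of elements of determinant `1`. -/
noncomputable def SL2Zhat : Subgroup GL2Zhat :=
  Subgroup.pi Set.univ fun p =>
    (Matrix.GeneralLinearGroup.det : GL (Fin 2) ℤ_[p.1] →* ℤ_[p.1]ˣ).ker

/-- The principal congruence subgroup of level `n`: the kernel of reduction modulo `n`,
i.e. elements congruent to the identity modulo `p ^ (v_p n)` at every prime `p`. -/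
noncomputable def congKer (n : ℕ) : Subgroup GL2Zhat :=
  Subgroup.pi Set.univ fun p =>
    (Units.map ((PadicInt.toZModPow (p := p.1) (n.factorization p.1)).mapMatrix
      (m := Fin 2)).toMonoidHom).ker

/-- The level of an open subgroup `H` of `GL(2, Ẑ)`: the least `n > 0` with
`ker(GL₂(Ẑ) → GL₂(ℤ/n)) ≤ H`. -/
noncomputable def levelGL (H : Subgroup GL2Zhat) : ℕ :=
  sInf {n : ℕ | 0 < n ∧ congKer n ≤ H}

/-- The level of an open subgroup `H` of `SL(2, Ẑ)`: the least `n > 0` such that `H`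
contains the kernel of reduction modulo `n` in `SL(2, Ẑ)`. -/
noncomputable def levelSL (H : Subgroup GL2Zhat) : ℕ :=
  sInf {n : ℕ | 0 < n ∧ congKer n ⊓ SL2Zhat ≤ H}

/-- The closed commutator subgroup `[G, G]`: the smallest closed subgroup containing all
commutators, i.e. the topological closure of the abstract commutator subgroup. -/
noncomputable def ccomm (G : Subgroup GL2Zhat) : Subgroup GL2Zhat :=
  Subgroup.topologicalClosure ⁅G, G⁆

/-- `M(G)`: the product of the primes dividing the level of `[G, G] ⊆ SL(2, Ẑ)`. -/
noncomputable def Mof (G : Subgroup GL2Zhat) : ℕ :=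
  (levelSL (ccomm G)).primeFactors.prod id

/-- Projection of `GL(2, Ẑ)` onto the product of the factors at primes dividing `M`,
i.e. onto `GL(2, ℤ_M)`. -/
def projDvd (M : ℕ) :
    GL2Zhat →* Π p : {p : Nat.Primes // (p : ℕ) ∣ M}, GL (Fin 2) ℤ_[p.1.1] where
  toFun g p := g p.1
  map_one' := rfl
  map_mul' _ _ := rfl

/-- The subgroup of scalar matrices of `GL(2, ℤ_p)`. -/
noncomputable def scalarSub (p : Nat.Primes) : Subgroup (GL (Fin 2) ℤ_[p.1]) :=
  (Units.map ((Matrix.scalar (Fin 2) :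
    ℤ_[p.1] →+* Matrix (Fin 2) (Fin 2) ℤ_[p.1]).toMonoidHom)).range

/-- The scalars `ℤ_M^× · I` of `GL(2, ℤ_M)`. -/
noncomputable def scalarsDvd (M : ℕ) :
    Subgroup (Π p : {p : Nat.Primes // (p : ℕ) ∣ M}, GL (Fin 2) ℤ_[p.1.1]) :=
  Subgroup.pi Set.univ fun p => scalarSub p.1

/-- The agreeable closure `𝒢 = (ℤ_M^× · G_M) × ∏_{ℓ ∤ M} GL(2, ℤ_ℓ)` of `G`, where
`M = M(G)` is the product of the primes dividing the level of `[G, G]`. -/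
noncomputable def agreeableClosure (G : Subgroup GL2Zhat) : Subgroup GL2Zhat :=
  Subgroup.comap (projDvd (Mof G))
    (scalarsDvd (Mof G) ⊔ G.map (projDvd (Mof G)))

open PadicInt
open scoped commutatorElement

namespace Stmt13Aux
variable {p : ℕ} [Fact p.Prime]

theorem matlit {R : Type*} [CommRing R] (a b c d e f g h : R) (h1 : a = e) (h2 : b = f)
    (h3 : c = g) (h4 : d = h) : !![a,b;c,d] = !![e,f;g,h] := by subst h1 h2 h3 h4; rfl

noncomputable def E12 (x : ℤ_[p]) : GL (Fin 2) ℤ_[p] :=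
  ⟨!![1, x; 0, 1], !![1, -x; 0, 1],
   by rw [Matrix.mul_fin_two, Matrix.one_fin_two]; apply matlit <;> ring,
   by rw [Matrix.mul_fin_two, Matrix.one_fin_two]; apply matlit <;> ring⟩

noncomputable def E21 (x : ℤ_[p]) : GL (Fin 2) ℤ_[p] :=
  ⟨!![1, 0; x, 1], !![1, 0; -x, 1],
   by rw [Matrix.mul_fin_two, Matrix.one_fin_two]; apply matlit <;> ring,
   by rw [Matrix.mul_fin_two, Matrix.one_fin_two]; apply matlit <;> ring⟩

noncomputable def Dg (u : ℤ_[p]ˣ) : GL (Fin 2) ℤ_[p] :=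
  ⟨!![(u:ℤ_[p]), 0; 0, ((u⁻¹:ℤ_[p]ˣ):ℤ_[p])], !![((u⁻¹:ℤ_[p]ˣ):ℤ_[p]), 0; 0, (u:ℤ_[p])],
   by rw [Matrix.mul_fin_two, Matrix.one_fin_two]; apply matlit <;> simp,
   by rw [Matrix.mul_fin_two, Matrix.one_fin_two]; apply matlit <;> simp⟩

theorem commDE12 (u : ℤ_[p]ˣ) (x : ℤ_[p]) :
    ⁅Dg u, E12 x⁆ = E12 (((u:ℤ_[p])*(u:ℤ_[p]) - 1) * x) := by
  have hab : (u:ℤ_[p]) * ((u⁻¹:ℤ_[p]ˣ):ℤ_[p]) = 1 := u.mul_inv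
  rw [commutatorElement_def]; apply Units.ext
  show !![(u:ℤ_[p]), 0; 0, ((u⁻¹:ℤ_[p]ˣ):ℤ_[p])] * !![1, x; 0, 1] *
      !![((u⁻¹:ℤ_[p]ˣ):ℤ_[p]), 0; 0, (u:ℤ_[p])] * !![1, -x; 0, 1] =
      !![1, ((u:ℤ_[p])*(u:ℤ_[p]) - 1) * x; 0, 1]
  rw [Matrix.mul_fin_two, Matrix.mul_fin_two, Matrix.mul_fin_two]
  apply matlit
  · linear_combination hab
  · linear_combination (-x) * hab
  · linear_combination (0:ℤ_[p]) * hab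
  · linear_combination hab

theorem commDE21 (u : ℤ_[p]ˣ) (y : ℤ_[p]) :
    ⁅Dg u, E21 y⁆ = E21 ((((u⁻¹:ℤ_[p]ˣ):ℤ_[p])*((u⁻¹:ℤ_[p]ˣ):ℤ_[p]) - 1) * y) := by
  have hab : (u:ℤ_[p]) * ((u⁻¹:ℤ_[p]ˣ):ℤ_[p]) = 1 := u.mul_inv
  rw [commutatorElement_def]; apply Units.ext
  show !![(u:ℤ_[p]), 0; 0, ((u⁻¹:ℤ_[p]ˣ):ℤ_[p])] * !![1, 0; y, 1] *
      !![((u⁻¹:ℤ_[p]ˣ):ℤ_[p]), 0; 0, (u:ℤ_[p])] * !![1, 0; -y, 1] =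
      !![1, 0; (((u⁻¹:ℤ_[p]ˣ):ℤ_[p])*((u⁻¹:ℤ_[p]ˣ):ℤ_[p]) - 1) * y, 1]
  rw [Matrix.mul_fin_two, Matrix.mul_fin_two, Matrix.mul_fin_two]
  apply matlit
  · linear_combination hab
  · linear_combination (0:ℤ_[p]) * hab
  · linear_combination (-y) * hab
  · linear_combination hab

theorem dDecomp (u : ℤ_[p]ˣ) (b1 c1 : ℤ_[p]) (hu : (u:ℤ_[p]) = 1 + b1 * c1) :
    Dg u = E12 b1 * E21 c1 * E12 (-(b1 * ((u⁻¹:ℤ_[p]ˣ):ℤ_[p]))) * E21 (-(c1 * (u:ℤ_[p]))) := by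
  have hab : (u:ℤ_[p]) * ((u⁻¹:ℤ_[p]ˣ):ℤ_[p]) = 1 := u.mul_inv
  apply Units.ext
  set a := (u:ℤ_[p]); set b := ((u⁻¹:ℤ_[p]ˣ):ℤ_[p])
  show !![a, 0; 0, b] =
    !![1, b1; 0, 1] * !![1, 0; c1, 1] * !![1, -(b1*b); 0, 1] * !![1, 0; -(c1*a), 1]
  rw [Matrix.mul_fin_two, Matrix.mul_fin_two, Matrix.mul_fin_two]
  apply matlit
  · linear_combination (-(b1^2*c1^2 + b1*c1)) * hab + (b1*c1 + 1) * hu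
  · linear_combination (b1) * hab + (-(b*b1)) * hu
  · linear_combination (-(b1*c1^2)) * hab + (c1) * hu
  · linear_combination hab + (-b) * hu

theorem luDecomp (g : GL (Fin 2) ℤ_[p]) (u : ℤ_[p]ˣ) (hu : (u:ℤ_[p]) = g.val 0 0)
    (hdet : g.val.det = 1) :
    g = E21 (g.val 1 0 * ((u⁻¹:ℤ_[p]ˣ):ℤ_[p])) * Dg u *
        E12 (g.val 0 1 * ((u⁻¹:ℤ_[p]ˣ):ℤ_[p])) := by
  have hab : (u:ℤ_[p]) * ((u⁻¹:ℤ_[p]ˣ):ℤ_[p]) = 1 := u.mul_inv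
  rw [Matrix.det_fin_two] at hdet
  apply Units.ext
  set A := g.val 0 0 with hA; set B := g.val 0 1 with hB
  set C := g.val 1 0 with hC; set d := g.val 1 1 with hd
  set b := ((u⁻¹:ℤ_[p]ˣ):ℤ_[p]) with hb
  show g.val = !![1, 0; C*b, 1] * !![(u:ℤ_[p]), 0; 0, b] * !![1, B*b; 0, 1]
  rw [Matrix.eta_fin_two g.val, Matrix.mul_fin_two, Matrix.mul_fin_two, ← hA, ← hB, ← hC, ← hd]
  apply matlit
  · linear_combination (-1 : ℤ_[p]) * hu
  · linear_combination (-B) * hab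
  · linear_combination (-C) * hab
  · linear_combination (-(b*b*B*C) - b*b + A*b*b*d + b*d) * hu + (b - A*b*d - d) * hab + (A*b*b) * hdet

end Stmt13Aux

namespace Stmt13Aux
variable {p : ℕ} [Fact p.Prime]

/-- entrywise congruence to 1 modulo `p^k` -/
def CongE (k : ℕ) (g : GL (Fin 2) ℤ_[p]) : Prop :=
  ∀ i j, (p:ℤ_[p])^k ∣ (g.val i j - (1 : Matrix (Fin 2) (Fin 2) ℤ_[p]) i j)

theorem congE_zero (g : GL (Fin 2) ℤ_[p]) : CongE 0 g := by
  intro i j; simp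

theorem congE_mono {k l : ℕ} (h : k ≤ l) {g : GL (Fin 2) ℤ_[p]} (hg : CongE l g) :
    CongE k g := fun i j => dvd_trans (pow_dvd_pow _ h) (hg i j)

theorem congE_E12 {k : ℕ} {x : ℤ_[p]} (hx : (p:ℤ_[p])^k ∣ x) : CongE k (E12 x) := by
  intro i j
  fin_cases i <;> fin_cases j <;>
    simp [E12, Matrix.one_fin_two] <;> simpa using hx

theorem congE_E21 {k : ℕ} {x : ℤ_[p]} (hx : (p:ℤ_[p])^k ∣ x) : CongE k (E21 x) := by
  intro i j
  fin_cases i <;> fin_cases j <;>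
    simp [E21, Matrix.one_fin_two] <;> simpa using hx

theorem congE_Dg {k : ℕ} {u : ℤ_[p]ˣ} (hu : (p:ℤ_[p])^k ∣ ((u:ℤ_[p]) - 1)) :
    CongE k (Dg u) := by
  have h2 : (p:ℤ_[p])^k ∣ (((u⁻¹:ℤ_[p]ˣ):ℤ_[p]) - 1) := by
    have : ((u⁻¹:ℤ_[p]ˣ):ℤ_[p]) - 1 = -(((u⁻¹:ℤ_[p]ˣ):ℤ_[p])) * ((u:ℤ_[p]) - 1) := by
      have hab : ((u⁻¹:ℤ_[p]ˣ):ℤ_[p]) * (u:ℤ_[p]) = 1 := u.inv_mul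
      linear_combination hab
    rw [this]
    exact Dvd.dvd.mul_left hu _
  intro i j
  fin_cases i <;> fin_cases j <;> simp [Dg, Matrix.one_fin_two] <;>
    first
      | simpa using hu
      | simpa using h2

end Stmt13Aux

namespace Stmt13Aux
variable {p : ℕ} [Fact p.Prime]

section LocalDecomp

variable {H : Subgroup (GL (Fin 2) ℤ_[p])} {a c : ℕ} {d : ℤ_[p]ˣ} {w : ℤ_[p]}

theorem memE12 (hd : (p:ℤ_[p])^a ∣ ((d:ℤ_[p]) - 1))
    (hw : ((d:ℤ_[p])*(d:ℤ_[p]) - 1) * w = (p:ℤ_[p])^c) (hwa : (p:ℤ_[p])^a ∣ w)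
    (hH : ∀ g₁ g₂ : GL (Fin 2) ℤ_[p], CongE a g₁ → CongE a g₂ → ⁅g₁,g₂⁆ ∈ H)
    {x : ℤ_[p]} (hx : (p:ℤ_[p])^c ∣ x) : E12 x ∈ H := by
  obtain ⟨t, ht⟩ := hx
  have : E12 x = ⁅Dg d, E12 (w * t)⁆ := by
    rw [commDE12]; congr 1; rw [ht, ← hw]; ring
  rw [this]
  exact hH _ _ (congE_Dg hd) (congE_E12 (Dvd.dvd.mul_right hwa t))

theorem memE21 (hd : (p:ℤ_[p])^a ∣ ((d:ℤ_[p]) - 1))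
    (hw : ((d:ℤ_[p])*(d:ℤ_[p]) - 1) * w = (p:ℤ_[p])^c) (hwa : (p:ℤ_[p])^a ∣ w)
    (hH : ∀ g₁ g₂ : GL (Fin 2) ℤ_[p], CongE a g₁ → CongE a g₂ → ⁅g₁,g₂⁆ ∈ H)
    {y : ℤ_[p]} (hy : (p:ℤ_[p])^c ∣ y) : E21 y ∈ H := by
  obtain ⟨t, ht⟩ := hy
  have : E21 y = ⁅Dg d, E21 (-((d:ℤ_[p])*(d:ℤ_[p])) * (w * t))⁆ := by
    rw [commDE21]; congr 1
    have hab : (d:ℤ_[p]) * ((d⁻¹:ℤ_[p]ˣ):ℤ_[p]) = 1 := d.mul_inv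
    rw [ht, ← hw]
    linear_combination ((w*t)*((d:ℤ_[p]) * ((d⁻¹:ℤ_[p]ˣ):ℤ_[p]) + 1)) * hab
  rw [this]
  exact hH _ _ (congE_Dg hd) (congE_E21 (Dvd.dvd.mul_left (Dvd.dvd.mul_right hwa t) _))

theorem memDg (hE12 : ∀ x : ℤ_[p], (p:ℤ_[p])^c ∣ x → E12 x ∈ H)
    (hE21 : ∀ y : ℤ_[p], (p:ℤ_[p])^c ∣ y → E21 y ∈ H)
    {u : ℤ_[p]ˣ} (hu : (p:ℤ_[p])^(2*c) ∣ ((u:ℤ_[p]) - 1)) : Dg u ∈ H := by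
  obtain ⟨z, hz⟩ := hu
  have hu' : (u:ℤ_[p]) = 1 + (p:ℤ_[p])^c * ((p:ℤ_[p])^c * z) := by
    rw [two_mul, pow_add] at hz; linear_combination hz
  rw [dDecomp u _ _ hu']
  exact mul_mem (mul_mem (mul_mem
    (hE12 _ (dvd_refl _))
    (hE21 _ (Dvd.dvd.mul_right (dvd_refl _) z)))
    (hE12 _ (dvd_neg.mpr (Dvd.dvd.mul_right (dvd_refl _) _))))
    (hE21 _ (dvd_neg.mpr (Dvd.dvd.mul_right (Dvd.dvd.mul_right (dvd_refl _) z) _)))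

theorem decomp_unit (hE12 : ∀ x : ℤ_[p], (p:ℤ_[p])^c ∣ x → E12 x ∈ H)
    (hE21 : ∀ y : ℤ_[p], (p:ℤ_[p])^c ∣ y → E21 y ∈ H)
    {g : GL (Fin 2) ℤ_[p]} (hg : CongE (2*c) g) (hdet : g.val.det = 1)
    (hcorner : IsUnit (g.val 0 0)) : g ∈ H := by
  obtain ⟨u, hu⟩ := hcorner
  have h00 : (p:ℤ_[p])^(2*c) ∣ (g.val 0 0 - 1) := by simpa [Matrix.one_apply] using hg 0 0
  have h10 : (p:ℤ_[p])^(2*c) ∣ g.val 1 0 := by simpa [Matrix.one_apply] using hg 1 0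
  have h01 : (p:ℤ_[p])^(2*c) ∣ g.val 0 1 := by simpa [Matrix.one_apply] using hg 0 1
  have hcc : c ≤ 2*c := by omega
  rw [luDecomp g u hu hdet]
  refine mul_mem (mul_mem (hE21 _ ?_) (memDg hE12 hE21 (by rw [hu]; exact h00))) (hE12 _ ?_)
  · exact Dvd.dvd.mul_right (dvd_trans (pow_dvd_pow _ hcc) h10) _
  · exact Dvd.dvd.mul_right (dvd_trans (pow_dvd_pow _ hcc) h01) _

theorem local_decomp (hd : (p:ℤ_[p])^a ∣ ((d:ℤ_[p]) - 1))
    (hw : ((d:ℤ_[p])*(d:ℤ_[p]) - 1) * w = (p:ℤ_[p])^c) (hwa : (p:ℤ_[p])^a ∣ w)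
    (hH : ∀ g₁ g₂ : GL (Fin 2) ℤ_[p], CongE a g₁ → CongE a g₂ → ⁅g₁,g₂⁆ ∈ H)
    {g : GL (Fin 2) ℤ_[p]} (hg : CongE (2*c) g) (hdet : g.val.det = 1) : g ∈ H := by
  have hE12 : ∀ x : ℤ_[p], (p:ℤ_[p])^c ∣ x → E12 x ∈ H := fun x hx => memE12 hd hw hwa hH hx
  have hE21 : ∀ y : ℤ_[p], (p:ℤ_[p])^c ∣ y → E21 y ∈ H := fun y hy => memE21 hd hw hwa hH hy
  by_cases hcorner : IsUnit (g.val 0 0)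
  · exact decomp_unit hE12 hE21 hg hdet hcorner
  -- corner not a unit: then c = 0 and we pivot by E12 1
  · have hc0 : c = 0 := by
      by_contra hc
      have h00 : (p:ℤ_[p])^(2*c) ∣ (g.val 0 0 - 1) := by simpa [Matrix.one_apply] using hg 0 0
      have hpnu : ¬ IsUnit (p:ℤ_[p]) := by
        rw [PadicInt.isUnit_iff, PadicInt.norm_p]
        exact ne_of_lt (inv_lt_one_of_one_lt₀ (by exact_mod_cast (Fact.out : p.Prime).one_lt))
      have hp : (p:ℤ_[p]) ∣ (g.val 0 0 - 1) :=
        dvd_trans (dvd_pow_self _ (by omega : 2*c ≠ 0)) h00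
      obtain ⟨z, hz⟩ := hp
      apply hcorner
      by_contra hnu
      have h1 : (1:ℤ_[p]) ∈ IsLocalRing.maximalIdeal ℤ_[p] := by
        have : (1:ℤ_[p]) = g.val 0 0 - (p:ℤ_[p]) * z := by linear_combination -hz
        rw [this]
        exact sub_mem ((IsLocalRing.mem_maximalIdeal _).mpr hnu)
          (Ideal.mul_mem_right _ _ ((IsLocalRing.mem_maximalIdeal _).mpr hpnu))
      exact (IsLocalRing.mem_maximalIdeal 1).mp h1 isUnit_one
    subst hc0
    have h10 : IsUnit (g.val 1 0) := by
      by_contra h10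
      have hdet' : g.val 0 0 * g.val 1 1 - g.val 0 1 * g.val 1 0 = 1 := by
        rw [← Matrix.det_fin_two]; exact hdet
      have hmem : (1:ℤ_[p]) ∈ IsLocalRing.maximalIdeal ℤ_[p] := by
        rw [← hdet']
        exact sub_mem (Ideal.mul_mem_right _ _ (by rwa [IsLocalRing.mem_maximalIdeal]))
          (Ideal.mul_mem_left _ _ (by rwa [IsLocalRing.mem_maximalIdeal]))
      exact (IsLocalRing.mem_maximalIdeal 1).mp hmem (isUnit_one)
    have key : (E12 (1:ℤ_[p]) * g).val 0 0 = g.val 0 0 + g.val 1 0 := by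
      rw [Units.val_mul, Matrix.eta_fin_two g.val]
      simp [E12, Matrix.mul_fin_two]
    have hg' : IsUnit ((E12 (1:ℤ_[p]) * g).val 0 0) := by
      rw [key]
      by_contra hsum
      have : g.val 1 0 = (g.val 0 0 + g.val 1 0) - g.val 0 0 := by ring
      have : ¬ IsUnit (g.val 1 0) := by
        rw [this]
        intro hunit
        have := sub_mem ((IsLocalRing.mem_maximalIdeal _).mpr hsum)
          ((IsLocalRing.mem_maximalIdeal _).mpr hcorner)
        exact (IsLocalRing.mem_maximalIdeal _).mp this hunit
      exact this h10
    have hdet' : (E12 (1:ℤ_[p]) * g).val.det = 1 := by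
      rw [Units.val_mul, Matrix.det_mul, hdet, mul_one]
      simp [E12, Matrix.det_fin_two]
    have hmem : E12 (1:ℤ_[p]) * g ∈ H :=
      decomp_unit hE12 hE21 (congE_zero _) hdet' hg'
    have hgeq : g = (E12 (1:ℤ_[p]))⁻¹ * (E12 (1:ℤ_[p]) * g) := by group
    rw [hgeq]
    exact mul_mem (inv_mem (hE12 1 (by simp))) hmem

end LocalDecomp
end Stmt13Aux

namespace Stmt13Aux
variable {p : ℕ} [Fact p.Prime]

theorem p_mem_max : (p:ℤ_[p]) ∈ IsLocalRing.maximalIdeal ℤ_[p] := by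
  rw [IsLocalRing.mem_maximalIdeal]
  intro h
  rw [PadicInt.isUnit_iff, PadicInt.norm_p] at h
  exact ne_of_lt (inv_lt_one_of_one_lt₀ (by exact_mod_cast (Fact.out : p.Prime).one_lt)) h

theorem unit_of_one_add_mem {x : ℤ_[p]} (hx : x ∈ IsLocalRing.maximalIdeal ℤ_[p]) :
    IsUnit (1 + x) := by
  by_contra h
  have h1 : (1:ℤ_[p]) ∈ IsLocalRing.maximalIdeal ℤ_[p] := by
    have he : (1:ℤ_[p]) = (1+x) - x := by ring
    rw [he]; exact sub_mem ((IsLocalRing.mem_maximalIdeal _).mpr h) hx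
  exact (IsLocalRing.mem_maximalIdeal 1).mp h1 isUnit_one

theorem isUnit_nat_of_not_dvd {n : ℕ} (hn : ¬ (p ∣ n)) : IsUnit (n : ℤ_[p]) := by
  rw [PadicInt.isUnit_iff]
  have h1 : ‖(n : ℤ_[p])‖ ≤ 1 := PadicInt.norm_le_one _
  rcases lt_or_eq_of_le h1 with h | h
  · exfalso
    apply hn
    have h2 : ‖((n:ℤ) : ℤ_[p])‖ < 1 := by exact_mod_cast h
    have h3 := (PadicInt.norm_int_lt_one_iff_dvd (n:ℤ)).mp h2
    exact_mod_cast h3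
  · exact h

theorem exists_dw (a : ℕ) :
    ∃ (d : ℤ_[p]ˣ) (w : ℤ_[p]), (p:ℤ_[p])^a ∣ ((d:ℤ_[p]) - 1) ∧
      ((d:ℤ_[p])*(d:ℤ_[p]) - 1) * w = (p:ℤ_[p])^(2*a+4) ∧ (p:ℤ_[p])^a ∣ w := by
  have hpk : ∀ k : ℕ, 0 < k → (p:ℤ_[p])^k ∈ IsLocalRing.maximalIdeal ℤ_[p] := by
    intro k hk
    have he : (p:ℤ_[p])^k = (p:ℤ_[p])^(k-1) * p := by
      rw [← pow_succ]; congr 1; omega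
    rw [he]
    exact Ideal.mul_mem_left _ _ p_mem_max
  obtain ⟨d, hdval⟩ := unit_of_one_add_mem (hpk (a+2) (by omega))
  by_cases hp2 : p = 2
  · subst hp2
    set q : ℤ_[2] := ((2:ℕ) : ℤ_[2]) with hq
    obtain ⟨t, htval⟩ := unit_of_one_add_mem (hpk (a+1) (by omega))
    have h2 : (2:ℤ_[2]) = q := by rw [hq]; norm_num
    refine ⟨d, ((t⁻¹:ℤ_[2]ˣ):ℤ_[2]) * q^(a+1), ?_, ?_, ?_⟩
    · rw [hdval]; simpa using pow_dvd_pow _ (by omega : a ≤ a+2)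
    · have key : (d:ℤ_[2])*(d:ℤ_[2]) - 1 = q^(a+2) * (q * (t:ℤ_[2])) := by
        rw [hdval, htval]
        have expand : (1+q^(a+2))*(1+q^(a+2)) - 1 = 2 * q^(a+2) + q^(a+2)*q^(a+2) := by ring
        rw [expand, h2]; ring
      rw [key]
      calc q^(a+2) * (q * (t:ℤ_[2])) * (((t⁻¹:ℤ_[2]ˣ):ℤ_[2]) * q^(a+1))
          = q^(a+2) * q * q^(a+1) * ((t:ℤ_[2]) * ((t⁻¹:ℤ_[2]ˣ):ℤ_[2])) := by ring
        _ = q^(2*a+4) := by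
            rw [t.mul_inv, mul_one, ← pow_succ, ← pow_add]; congr 1; omega
    · exact Dvd.dvd.mul_left (pow_dvd_pow _ (by omega : a ≤ a+1)) _
  · have h2u : IsUnit (2:ℤ_[p]) := by
      have := isUnit_nat_of_not_dvd (p := p) (n := 2) (by
        intro h; exact hp2 ((Nat.prime_dvd_prime_iff_eq (Fact.out) Nat.prime_two).mp h))
      simpa using this
    obtain ⟨z, hz⟩ := h2u
    have hs : IsUnit (2 + (p:ℤ_[p])^(a+2)) := by
      have he : 2 + (p:ℤ_[p])^(a+2) =
          (z:ℤ_[p]) * (1 + ((z⁻¹:ℤ_[p]ˣ):ℤ_[p]) * (p:ℤ_[p])^(a+2)) := by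
        calc 2 + (p:ℤ_[p])^(a+2) = 2 + 1 * (p:ℤ_[p])^(a+2) := by ring
          _ = (z:ℤ_[p]) + ((z:ℤ_[p]) * ((z⁻¹:ℤ_[p]ˣ):ℤ_[p])) * (p:ℤ_[p])^(a+2) := by
              rw [z.mul_inv, hz]
          _ = (z:ℤ_[p]) * (1 + ((z⁻¹:ℤ_[p]ˣ):ℤ_[p]) * (p:ℤ_[p])^(a+2)) := by ring
      rw [he]
      exact (Units.isUnit z).mul
        (unit_of_one_add_mem (Ideal.mul_mem_left _ _ (hpk _ (by omega))))
    obtain ⟨s, hsval⟩ := hs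
    refine ⟨d, ((s⁻¹:ℤ_[p]ˣ):ℤ_[p]) * (p:ℤ_[p])^(a+2), ?_, ?_, ?_⟩
    · rw [hdval]; simpa using pow_dvd_pow _ (by omega : a ≤ a+2)
    · have key : (d:ℤ_[p])*(d:ℤ_[p]) - 1 = (p:ℤ_[p])^(a+2) * (s:ℤ_[p]) := by
        rw [hdval, hsval]; ring
      rw [key]
      calc (p:ℤ_[p])^(a+2) * (s:ℤ_[p]) * (((s⁻¹:ℤ_[p]ˣ):ℤ_[p]) * (p:ℤ_[p])^(a+2))
          = (p:ℤ_[p])^(a+2) * (p:ℤ_[p])^(a+2) * ((s:ℤ_[p]) * ((s⁻¹:ℤ_[p]ˣ):ℤ_[p])) := by ring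
        _ = (p:ℤ_[p])^(2*a+4) := by rw [s.mul_inv, mul_one, ← pow_add]; congr 1; omega
    · exact Dvd.dvd.mul_left (pow_dvd_pow _ (by omega : a ≤ a+2)) _

theorem exists_dw0 (hp2 : p ≠ 2) (hp3 : p ≠ 3) :
    ∃ (d : ℤ_[p]ˣ) (w : ℤ_[p]), ((d:ℤ_[p])*(d:ℤ_[p]) - 1) * w = 1 := by
  have h2u : IsUnit (2:ℤ_[p]) := by
    have := isUnit_nat_of_not_dvd (p := p) (n := 2) (by
      intro h; exact hp2 ((Nat.prime_dvd_prime_iff_eq (Fact.out) Nat.prime_two).mp h))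
    simpa using this
  have h3u : IsUnit (3:ℤ_[p]) := by
    have := isUnit_nat_of_not_dvd (p := p) (n := 3) (by
      intro h; exact hp3 ((Nat.prime_dvd_prime_iff_eq (Fact.out) Nat.prime_three).mp h))
    simpa using this
  obtain ⟨d, hd⟩ := h2u
  obtain ⟨s, hs⟩ := h3u
  refine ⟨d, ((s⁻¹:ℤ_[p]ˣ):ℤ_[p]), ?_⟩
  have : (d:ℤ_[p])*(d:ℤ_[p]) - 1 = (s:ℤ_[p]) := by rw [hd, hs]; norm_num
  rw [this, s.mul_inv]

end Stmt13Aux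

namespace Stmt13Aux
variable {p : ℕ} [Fact p.Prime]

theorem leaf_open {O : Set ℤ_[p]} (hO : IsOpen O) {x : ℤ_[p]} (hx : x ∈ O) :
    ∃ k : ℕ, ∀ y : ℤ_[p], (p:ℤ_[p])^k ∣ (y - x) → y ∈ O := by
  obtain ⟨ε, hε, hball⟩ := Metric.isOpen_iff.mp hO x hx
  have hp1 : (p:ℝ)⁻¹ < 1 :=
    inv_lt_one_of_one_lt₀ (by exact_mod_cast (Fact.out : p.Prime).one_lt)
  obtain ⟨k, hk⟩ := exists_pow_lt_of_lt_one hε hp1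
  refine ⟨k, fun y hy => hball ?_⟩
  rw [Metric.mem_ball, dist_eq_norm]
  calc ‖y - x‖ ≤ (p:ℝ)^(-(k:ℤ)) := by
        rw [PadicInt.norm_le_pow_iff_mem_span_pow, Ideal.mem_span_singleton]; exact hy
    _ = ((p:ℝ)⁻¹)^k := by rw [inv_pow, ← zpow_natCast, ← zpow_neg]
    _ < ε := hk

theorem row_open {O : Set (Fin 2 → ℤ_[p])} (hO : IsOpen O) {r0 : Fin 2 → ℤ_[p]} (hr : r0 ∈ O) :
    ∃ k : ℕ, ∀ r : Fin 2 → ℤ_[p], (∀ j, (p:ℤ_[p])^k ∣ (r j - r0 j)) → r ∈ O := by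
  obtain ⟨I, u, hu, hsub⟩ := isOpen_pi_iff.mp hO r0 hr
  have step : ∀ j : Fin 2, ∃ k : ℕ, j ∈ I →
      ∀ y : ℤ_[p], (p:ℤ_[p])^k ∣ (y - r0 j) → y ∈ u j := by
    intro j
    by_cases hj : j ∈ I
    · obtain ⟨k, hk⟩ := leaf_open (hu j hj).1 (hu j hj).2
      exact ⟨k, fun _ => hk⟩
    · exact ⟨0, fun h => absurd h hj⟩
  choose k hk using step
  refine ⟨Finset.univ.sup k, fun r hr' => hsub ?_⟩
  intro j hj
  exact hk j hj _ (dvd_trans (pow_dvd_pow _ (Finset.le_sup (Finset.mem_univ j))) (hr' j))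

theorem entry_open {V : Set (Matrix (Fin 2) (Fin 2) ℤ_[p])} (hV : IsOpen V)
    {m0 : Matrix (Fin 2) (Fin 2) ℤ_[p]} (hm : m0 ∈ V) :
    ∃ k : ℕ, ∀ N : Matrix (Fin 2) (Fin 2) ℤ_[p],
      (∀ i j, (p:ℤ_[p])^k ∣ (N i j - m0 i j)) → N ∈ V := by
  obtain ⟨I, u, hu, hsub⟩ := isOpen_pi_iff.mp hV m0 hm
  have step : ∀ i : Fin 2, ∃ k : ℕ, i ∈ I →
      ∀ r : Fin 2 → ℤ_[p], (∀ j, (p:ℤ_[p])^k ∣ (r j - m0 i j)) → r ∈ u i := by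
    intro i
    by_cases hi : i ∈ I
    · obtain ⟨k, hk⟩ := row_open (hu i hi).1 (hu i hi).2
      exact ⟨k, fun _ => hk⟩
    · exact ⟨0, fun h => absurd h hi⟩
  choose k hk using step
  refine ⟨Finset.univ.sup k, fun N hN => hsub ?_⟩
  intro i hi
  exact hk i hi _ (fun j =>
    dvd_trans (pow_dvd_pow _ (Finset.le_sup (Finset.mem_univ i))) (hN i j))

theorem congE_inv {k : ℕ} {g : GL (Fin 2) ℤ_[p]} (hg : CongE k g) : CongE k g⁻¹ := by
  intro i j
  have hinv : (g⁻¹).val * g.val = 1 := by simp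
  have key : (g⁻¹).val i j - (1 : Matrix (Fin 2) (Fin 2) ℤ_[p]) i j
      = ((g⁻¹).val * ((1 : Matrix (Fin 2) (Fin 2) ℤ_[p]) - g.val)) i j := by
    rw [Matrix.mul_sub, hinv, mul_one, Matrix.sub_apply]
  rw [key, Matrix.mul_apply]
  refine Finset.dvd_sum (fun l _ => Dvd.dvd.mul_left ?_ _)
  rw [Matrix.sub_apply]
  simpa [neg_sub] using (hg l j).neg_right

theorem loc_open {U : Set (GL (Fin 2) ℤ_[p])} (hU : IsOpen U)
    (h1 : (1 : GL (Fin 2) ℤ_[p]) ∈ U) :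
    ∃ k, ∀ g : GL (Fin 2) ℤ_[p], CongE k g → g ∈ U := by
  obtain ⟨V, hV, hVU⟩ := Units.isInducing_embedProduct.isOpen_iff.mp hU
  have h1V : ((1 : Matrix (Fin 2) (Fin 2) ℤ_[p]),
      MulOpposite.op (1 : Matrix (Fin 2) (Fin 2) ℤ_[p])) ∈ V := by
    have := h1
    rw [← hVU] at this
    simpa [Units.embedProduct_apply] using this
  obtain ⟨V1, V2, hV1, hV2, h1V1, h1V2, hsub⟩ := isOpen_prod_iff.mp hV _ _ h1V
  have hV2' : IsOpen (MulOpposite.op ⁻¹' V2 : Set (Matrix (Fin 2) (Fin 2) ℤ_[p])) :=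
    hV2.preimage MulOpposite.continuous_op
  obtain ⟨k1, hk1⟩ := entry_open hV1 h1V1
  obtain ⟨k2, hk2⟩ := entry_open hV2' (by exact h1V2)
  refine ⟨max k1 k2, fun g hg => ?_⟩
  rw [← hVU]
  have hgmem : Units.embedProduct _ g = (g.val, MulOpposite.op (g⁻¹).val) :=
    Units.embedProduct_apply _ _
  show Units.embedProduct _ g ∈ V
  rw [hgmem]
  apply hsub
  constructor
  · exact hk1 _ (fun i j => dvd_trans (pow_dvd_pow _ (le_max_left k1 k2)) (hg i j))
  · show (g⁻¹).val ∈ MulOpposite.op ⁻¹' V2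
    exact hk2 _ (fun i j =>
      dvd_trans (pow_dvd_pow _ (le_max_right k1 k2)) (congE_inv hg i j))

end Stmt13Aux

namespace Stmt13Aux
open PadicInt

section Bridge
variable {p : ℕ} [Fact p.Prime]

theorem toZModPow_eq_iff (k : ℕ) (x y : ℤ_[p]) :
    toZModPow k x = toZModPow k y ↔ (p:ℤ_[p])^k ∣ (x - y) := by
  rw [← sub_eq_zero, ← map_sub, ← RingHom.mem_ker, ker_toZModPow, Ideal.mem_span_singleton]

theorem congE_one (k : ℕ) : CongE k (1 : GL (Fin 2) ℤ_[p]) := by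
  intro i j; simp

theorem comm_mul_central {Γ : Type*} [Group Γ] (g h s t : Γ)
    (hs : ∀ x, s * x = x * s) (ht : ∀ x, t * x = x * t) : ⁅s * g, t * h⁆ = ⁅g, h⁆ := by
  rw [hs g, ht h]
  have h1 : ∀ w : Γ, (g*s) * w * (g*s)⁻¹ = g * w * g⁻¹ := by
    intro w
    have hin : s * w * s⁻¹ = w := by rw [hs w]; group
    calc (g*s)*w*(g*s)⁻¹ = g*(s*w*s⁻¹)*g⁻¹ := by rw [mul_inv_rev]; group
      _ = g*w*g⁻¹ := by rw [hin]
  calc ⁅g*s, h*t⁆ = (g*s)*(h*t)*(g*s)⁻¹*(h*t)⁻¹ := commutatorElement_def _ _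
    _ = g*(h*t)*g⁻¹*(h*t)⁻¹ := by rw [h1]
    _ = g*h*(t*g⁻¹)*(t⁻¹*h⁻¹) := by rw [mul_inv_rev]; group
    _ = g*h*(g⁻¹*t)*(t⁻¹*h⁻¹) := by rw [ht g⁻¹]
    _ = g*h*g⁻¹*h⁻¹ := by group
    _ = ⁅g, h⁆ := (commutatorElement_def g h).symm

theorem units_ker_iff {k : ℕ} {g : GL (Fin 2) ℤ_[p]} :
    g ∈ (Units.map ((toZModPow (p := p) k).mapMatrix (m := Fin 2)).toMonoidHom).ker ↔
      CongE k g := by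
  rw [MonoidHom.mem_ker, Units.ext_iff, Units.coe_map, Units.val_one]
  show (toZModPow (p := p) k).mapMatrix g.val = 1 ↔ _
  rw [RingHom.mapMatrix_apply, ← Matrix.ext_iff]
  refine forall_congr' fun i => forall_congr' fun j => ?_
  rw [Matrix.map_apply]
  have hone : (1 : Matrix (Fin 2) (Fin 2) (ZMod (p^k))) i j
      = toZModPow k ((1 : Matrix (Fin 2) (Fin 2) ℤ_[p]) i j) := by
    by_cases h : i = j <;> simp [Matrix.one_apply, h]
  rw [hone]
  exact toZModPow_eq_iff k _ _

end Bridge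

theorem mem_congKer_iff {n : ℕ} {g : GL2Zhat} :
    g ∈ congKer n ↔ ∀ q : Nat.Primes, CongE (n.factorization q.1) (g q) := by
  rw [congKer, Subgroup.mem_pi]
  constructor
  · intro h q; exact units_ker_iff.mp (h q (Set.mem_univ q))
  · intro h q _; exact units_ker_iff.mpr (h q)

theorem mem_SL2_iff {g : GL2Zhat} :
    g ∈ SL2Zhat ↔ ∀ q : Nat.Primes, Matrix.GeneralLinearGroup.det (g q) = 1 := by
  rw [SL2Zhat, Subgroup.mem_pi]
  constructor
  · intro h q; exact h q (Set.mem_univ q)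
  · intro h q _; exact h q

theorem comm_apply (x y : GL2Zhat) (q : Nat.Primes) : ⁅x, y⁆ q = ⁅x q, y q⁆ :=
  map_commutatorElement (Pi.evalMonoidHom (fun r : Nat.Primes => GL (Fin 2) ℤ_[r.1]) q) x y

theorem exists_conglevel (G : Subgroup GL2Zhat) (hG : IsOpen (G : Set GL2Zhat)) :
    ∃ (T : Finset Nat.Primes) (k : Nat.Primes → ℕ),
      ∀ g : GL2Zhat, (∀ q ∈ T, CongE (k q) (g q)) → g ∈ G := by
  obtain ⟨I, u, hu, hsub⟩ := isOpen_pi_iff.mp hG 1 G.one_mem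
  have step : ∀ q : Nat.Primes, ∃ k : ℕ, q ∈ I →
      ∀ h : GL (Fin 2) ℤ_[q.1], CongE k h → h ∈ u q := by
    intro q
    by_cases hq : q ∈ I
    · obtain ⟨k, hk⟩ := loc_open (hu q hq).1 (hu q hq).2
      exact ⟨k, fun _ => hk⟩
    · exact ⟨0, fun h => absurd h hq⟩
  choose k hk using step
  exact ⟨I, k, fun g hg => hsub (fun q hq => hk q hq _ (hg q hq))⟩

theorem heavy (G : Subgroup GL2Zhat) (hG : IsOpen (G : Set GL2Zhat)) :
    ∃ n : ℕ, 0 < n ∧ congKer n ⊓ SL2Zhat ≤ ccomm G := by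
  classical
  obtain ⟨T, k, hTk⟩ := exists_conglevel G hG
  set B : Finset Nat.Primes :=
    insert ⟨2, Nat.prime_two⟩ (insert ⟨3, Nat.prime_three⟩ T) with hB
  set a : Nat.Primes → ℕ := fun q => if q ∈ T then k q else 0 with ha
  set n : ℕ := ∏ q ∈ B, (q:ℕ) ^ (2 * (2 * a q + 4)) with hn
  have hn0 : 0 < n := Finset.prod_pos (fun q _ => pow_pos q.2.pos _)
  refine ⟨n, hn0, ?_⟩
  rintro g ⟨hgK, hgS⟩
  have hker := mem_congKer_iff.mp hgK
  have hdets := mem_SL2_iff.mp hgS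
  have hdet : ∀ q : Nat.Primes, ((g q).val).det = 1 := by
    intro q
    have := congrArg Units.val (hdets q)
    rwa [Matrix.GeneralLinearGroup.val_det_apply, Units.val_one] at this
  have hGmem : ∀ (q : Nat.Primes) (h : GL (Fin 2) ℤ_[q.1]), CongE (a q) h →
      Pi.mulSingle q h ∈ G := by
    intro q h hh
    apply hTk
    intro r hr
    by_cases hrq : r = q
    · subst hrq
      rw [Pi.mulSingle_eq_same]
      have heq : a r = k r := if_pos hr
      rw [← heq]
      exact hh
    · rw [Pi.mulSingle_eq_of_ne hrq]
      exact congE_one _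
  have hloc : ∀ q : Nat.Primes, Pi.mulSingle q (g q) ∈ (⁅G, G⁆ : Subgroup GL2Zhat) := by
    intro q
    set Hq : Subgroup (GL (Fin 2) ℤ_[q.1]) :=
      Subgroup.comap (MonoidHom.mulSingle (fun r : Nat.Primes => GL (Fin 2) ℤ_[r.1]) q)
        ⁅G, G⁆ with hHq
    have hH : ∀ g₁ g₂ : GL (Fin 2) ℤ_[q.1], CongE (a q) g₁ → CongE (a q) g₂ →
        ⁅g₁, g₂⁆ ∈ Hq := by
      intro g₁ g₂ h₁ h₂
      show (MonoidHom.mulSingle (fun r : Nat.Primes => GL (Fin 2) ℤ_[r.1]) q) ⁅g₁,g₂⁆ ∈ ⁅G,G⁆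
      rw [map_commutatorElement]
      exact Subgroup.commutator_mem_commutator (hGmem q g₁ h₁) (hGmem q g₂ h₂)
    show g q ∈ Hq
    by_cases hqB : q ∈ B
    · obtain ⟨d, w, hd, hw, hwa⟩ := exists_dw (p := q.1) (a q)
      have hcong : CongE (2 * (2 * a q + 4)) (g q) := by
        refine congE_mono ?_ (hker q)
        have hdvd : (q:ℕ) ^ (2 * (2 * a q + 4)) ∣ n := by
          rw [hn]; exact Finset.dvd_prod_of_mem _ hqB
        exact (Nat.Prime.pow_dvd_iff_le_factorization q.2 hn0.ne').mp hdvd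
      exact local_decomp hd hw hwa hH hcong (hdet q)
    · have hqT : q ∉ T := by
        intro h
        apply hqB
        rw [hB]
        exact Finset.mem_insert_of_mem (Finset.mem_insert_of_mem h)
      have haq : a q = 0 := if_neg hqT
      have hq2 : q.1 ≠ 2 := by
        intro h
        apply hqB
        have hqe : q = (⟨2, Nat.prime_two⟩ : Nat.Primes) := Subtype.ext h
        rw [hB, hqe]
        exact Finset.mem_insert_self _ _
      have hq3 : q.1 ≠ 3 := by
        intro h
        apply hqB
        have hqe : q = (⟨3, Nat.prime_three⟩ : Nat.Primes) := Subtype.ext h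
        rw [hB, hqe]
        exact Finset.mem_insert_of_mem (Finset.mem_insert_self _ _)
      obtain ⟨d, w, hw0⟩ := exists_dw0 (p := q.1) hq2 hq3
      rw [haq] at hH
      have hd0 : ((q:ℕ):ℤ_[q.1])^(0:ℕ) ∣ ((d:ℤ_[q.1]) - 1) := by simpa using one_dvd _
      have hw' : ((d:ℤ_[q.1])*(d:ℤ_[q.1]) - 1) * w = ((q:ℕ):ℤ_[q.1])^(0:ℕ) := by
        rw [pow_zero]; exact hw0
      have hwa0 : ((q:ℕ):ℤ_[q.1])^(0:ℕ) ∣ w := by simpa using one_dvd _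
      have hcong0 : CongE (2*0) (g q) := by simpa using congE_zero (g q)
      exact local_decomp hd0 hw' hwa0 hH hcong0 (hdet q)
  have key : ∀ (I : Finset Nat.Primes), ∃ h : GL2Zhat,
      h ∈ (⁅G, G⁆ : Subgroup GL2Zhat) ∧ (∀ q ∈ I, h q = g q) ∧ (∀ q ∉ I, h q = 1) := by
    intro I
    classical
    induction I using Finset.induction_on with
    | empty => exact ⟨1, one_mem _, by simp, by simp⟩
    | @insert a' I' hnm ih =>
      obtain ⟨h, hh, hhin, hhout⟩ := ih
      refine ⟨Pi.mulSingle a' (g a') * h, mul_mem (hloc a') hh, ?_, ?_⟩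
      · intro q hq
        rcases Finset.mem_insert.mp hq with hq | hq
        · subst hq
          rw [Pi.mul_apply, Pi.mulSingle_eq_same, hhout q hnm, mul_one]
        · have hne : q ≠ a' := fun he => hnm (he ▸ hq)
          rw [Pi.mul_apply, Pi.mulSingle_eq_of_ne hne, hhin q hq, one_mul]
      · intro q hq
        have hq1 : q ≠ a' := fun he => hq (he ▸ Finset.mem_insert_self _ _)
        have hq2 : q ∉ I' := fun he => hq (Finset.mem_insert_of_mem he)
        rw [Pi.mul_apply, Pi.mulSingle_eq_of_ne hq1, hhout q hq2, one_mul]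
  have hclo : (ccomm G : Set GL2Zhat)
      = closure ((⁅G, G⁆ : Subgroup GL2Zhat) : Set GL2Zhat) :=
    Subgroup.topologicalClosure_coe
  rw [← SetLike.mem_coe, hclo, mem_closure_iff]
  intro o ho hgo
  obtain ⟨I, u, hu, hsub⟩ := isOpen_pi_iff.mp ho g hgo
  obtain ⟨h, hh, hhin, _⟩ := key I
  refine ⟨h, hsub ?_, hh⟩
  intro q hq
  rw [hhin q hq]
  exact (hu q hq).2

theorem scalar_central {q : Nat.Primes} {s : GL (Fin 2) ℤ_[q.1]} (hs : s ∈ scalarSub q)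
    (x : GL (Fin 2) ℤ_[q.1]) : s * x = x * s := by
  obtain ⟨r, hr⟩ := hs
  rw [← hr]
  apply Units.ext
  rw [Units.val_mul, Units.val_mul]
  show (Matrix.scalar (Fin 2) (r:ℤ_[q.1])) * x.val = x.val * (Matrix.scalar (Fin 2) (r:ℤ_[q.1]))
  exact (Matrix.scalar_commute _ (fun r' => Commute.all _ r') _).eq

instance scalars_normal (M : ℕ) : (scalarsDvd M).Normal := by
  constructor
  intro s hs g
  have heq : g * s * g⁻¹ = s := by
    funext q'
    show g q' * s q' * (g q')⁻¹ = s q'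
    rw [← scalar_central (hs q' (Set.mem_univ q')) (g q')]
    group
  rw [heq]
  exact hs

end Stmt13Aux

/-- For any open subgroup `G` of `GL(2, Ẑ)`, with `M` the product of the primes dividing
the level of `[G, G] ⊆ SL(2, Ẑ)` and `𝒢 := (ℤ_M^× · G_M) × ∏_{ℓ ∤ M} GL(2, ℤ_ℓ)`,
we have `G ⊆ 𝒢` and `[G, G] = [𝒢, 𝒢]`. -/
theorem stmt13 (G : Subgroup GL2Zhat) (hG : IsOpen (G : Set GL2Zhat)) :
    G ≤ agreeableClosure G ∧ ccomm G = ccomm (agreeableClosure G) := by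
  classical
  have part1 : G ≤ agreeableClosure G := by
    intro x hx
    show projDvd (Mof G) x ∈ scalarsDvd (Mof G) ⊔ G.map (projDvd (Mof G))
    exact Subgroup.mem_sup_right (Subgroup.mem_map_of_mem _ hx)
  refine ⟨part1, ?_⟩
  obtain ⟨n', hn'⟩ := Stmt13Aux.heavy G hG
  have hne : {m : ℕ | 0 < m ∧ congKer m ⊓ SL2Zhat ≤ ccomm G}.Nonempty := ⟨n', hn'⟩
  obtain ⟨hn0, hker⟩ : 0 < levelSL (ccomm G) ∧
      congKer (levelSL (ccomm G)) ⊓ SL2Zhat ≤ ccomm G := Nat.sInf_mem hne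
  have hfac0 : ∀ q : Nat.Primes, ¬ ((q:ℕ) ∣ Mof G) →
      (levelSL (ccomm G)).factorization q.1 = 0 := by
    intro q hq
    by_contra h0
    apply hq
    have hmem : q.1 ∈ (levelSL (ccomm G)).primeFactors := by
      rw [← Nat.support_factorization]
      exact Finsupp.mem_support_iff.mpr h0
    have hdvd : (id q.1) ∣ (levelSL (ccomm G)).primeFactors.prod id :=
      Finset.dvd_prod_of_mem id hmem
    exact hdvd
  have hcomm : ⁅agreeableClosure G, agreeableClosure G⁆ ≤ ccomm G := by
    rw [Subgroup.commutator_le]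
    intro x hx y hy
    have hx' : projDvd (Mof G) x ∈ scalarsDvd (Mof G) ⊔ G.map (projDvd (Mof G)) := hx
    have hy' : projDvd (Mof G) y ∈ scalarsDvd (Mof G) ⊔ G.map (projDvd (Mof G)) := hy
    rw [← SetLike.mem_coe, Subgroup.normal_mul] at hx' hy'
    obtain ⟨s, hs, mx, hmx, hsx⟩ := hx'
    obtain ⟨t, ht, my, hmy, hty⟩ := hy'
    obtain ⟨γ, hγ, hγm⟩ := Subgroup.mem_map.mp hmx
    obtain ⟨δ, hδ, hδm⟩ := Subgroup.mem_map.mp hmy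
    have hwmem : ⁅x, y⁆ * ⁅γ, δ⁆⁻¹ ∈ congKer (levelSL (ccomm G)) ⊓ SL2Zhat := by
      have hwq : ∀ q : Nat.Primes,
          (⁅x, y⁆ * ⁅γ, δ⁆⁻¹) q = ⁅x q, y q⁆ * (⁅γ q, δ q⁆)⁻¹ := by
        intro q
        rw [Pi.mul_apply, Pi.inv_apply, Stmt13Aux.comm_apply, Stmt13Aux.comm_apply]
      refine ⟨Stmt13Aux.mem_congKer_iff.mpr ?_, Stmt13Aux.mem_SL2_iff.mpr ?_⟩
      · intro q
        by_cases hq : (q:ℕ) ∣ Mof G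
        · set Q : {r : Nat.Primes // (r:ℕ) ∣ Mof G} := ⟨q, hq⟩ with hQ
          have h1 := congrFun hsx Q
          have h2 := congrFun hγm Q
          have hxq : x q = s Q * γ q := by
            have h1' : s Q * mx Q = x q := h1
            have h2' : mx Q = γ q := h2.symm
            rw [← h1', h2']
          have h3 := congrFun hty Q
          have h4 := congrFun hδm Q
          have hyq : y q = t Q * δ q := by
            have h3' : t Q * my Q = y q := h3
            have h4' : my Q = δ q := h4.symm
            rw [← h3', h4']
          have hcq : ⁅x q, y q⁆ = ⁅γ q, δ q⁆ := by
            rw [hxq, hyq]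
            exact Stmt13Aux.comm_mul_central (γ q) (δ q) (s Q) (t Q)
              (fun z => Stmt13Aux.scalar_central (hs Q (Set.mem_univ Q)) z)
              (fun z => Stmt13Aux.scalar_central (ht Q (Set.mem_univ Q)) z)
          have hw1 : (⁅x, y⁆ * ⁅γ, δ⁆⁻¹) q = 1 := by
            rw [hwq q, hcq]
            group
          rw [hw1]
          exact Stmt13Aux.congE_one _
        · rw [hfac0 q hq]
          exact Stmt13Aux.congE_zero _
      · intro q
        rw [hwq q, map_mul, map_inv, map_commutatorElement, map_commutatorElement,
          commutatorElement_eq_one_iff_commute.mpr (Commute.all _ _),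
          commutatorElement_eq_one_iff_commute.mpr (Commute.all _ _)]
        simp
    have hccomm : ⁅x, y⁆ * ⁅γ, δ⁆⁻¹ ∈ ccomm G := hker hwmem
    have hγδ : ⁅γ, δ⁆ ∈ ccomm G :=
      (Subgroup.le_topologicalClosure _) (Subgroup.commutator_mem_commutator hγ hδ)
    have hfin : ⁅x, y⁆ = (⁅x, y⁆ * ⁅γ, δ⁆⁻¹) * ⁅γ, δ⁆ := by group
    rw [hfin]
    exact mul_mem hccomm hγδ
  apply le_antisymm
  · show Subgroup.topologicalClosure ⁅G, G⁆ ≤ ccomm (agreeableClosure G)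
    exact Subgroup.topologicalClosure_minimal _
      ((Subgroup.commutator_mono part1 part1).trans (Subgroup.le_topologicalClosure _))
      (Subgroup.isClosed_topologicalClosure _)
  · show Subgroup.topologicalClosure ⁅agreeableClosure G, agreeableClosure G⁆ ≤ ccomm G
    exact Subgroup.topologicalClosure_minimal _ hcomm (Subgroup.isClosed_topologicalClosure _)
end

section
/- Let C be the closed subgroup of SL(2, Z_3) generated by the set of commutators {g₁g₂g₁⁻¹g₂⁻¹ : g₁, g₂ ∈ GL(2, Z_3), det(g₁) = det(g₂)}. Then C = SL(2, Z_3). (In particular, it suffices to show that the image of C modulo 3 is all of SL(2, Z/3Z), since C contains the commutator subgroup of SL(2, Z_3), which has level 3.) -/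
instance : Fact (Nat.Prime 3) := ⟨by norm_num⟩

open scoped commutatorElement

section Aux

variable {R : Type*} [CommRing R]

/-- The elementary matrix `!![1, t; 0, 1]` as an element of `GL (Fin 2) R`. -/
def auxE12 (t : R) : GL (Fin 2) R :=
  ⟨!![1, t; 0, 1], !![1, -t; 0, 1],
    by ext i j; fin_cases i <;> fin_cases j <;> simp [Matrix.mul_apply, Fin.sum_univ_two],
    by ext i j; fin_cases i <;> fin_cases j <;> simp [Matrix.mul_apply, Fin.sum_univ_two]⟩

/-- The elementary matrix `!![1, 0; t, 1]` as an element of `GL (Fin 2) R`. -/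
def auxE21 (t : R) : GL (Fin 2) R :=
  ⟨!![1, 0; t, 1], !![1, 0; -t, 1],
    by ext i j; fin_cases i <;> fin_cases j <;> simp [Matrix.mul_apply, Fin.sum_univ_two],
    by ext i j; fin_cases i <;> fin_cases j <;> simp [Matrix.mul_apply, Fin.sum_univ_two]⟩

/-- The diagonal matrix `diag (-1, 1)` as an element of `GL (Fin 2) R`. -/
def auxD : GL (Fin 2) R :=
  ⟨!![-1, 0; 0, 1], !![-1, 0; 0, 1],
    by ext i j; fin_cases i <;> fin_cases j <;> simp [Matrix.mul_apply, Fin.sum_univ_two],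
    by ext i j; fin_cases i <;> fin_cases j <;> simp [Matrix.mul_apply, Fin.sum_univ_two]⟩

/-- The involution `!![-1, t; 0, 1]` as an element of `GL (Fin 2) R`. -/
def auxU (t : R) : GL (Fin 2) R :=
  ⟨!![-1, t; 0, 1], !![-1, t; 0, 1],
    by ext i j; fin_cases i <;> fin_cases j <;> simp [Matrix.mul_apply, Fin.sum_univ_two],
    by ext i j; fin_cases i <;> fin_cases j <;> simp [Matrix.mul_apply, Fin.sum_univ_two]⟩

/-- The involution `!![-1, 0; t, 1]` as an element of `GL (Fin 2) R`. -/
def auxL (t : R) : GL (Fin 2) R :=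
  ⟨!![-1, 0; t, 1], !![-1, 0; t, 1],
    by ext i j; fin_cases i <;> fin_cases j <;> simp [Matrix.mul_apply, Fin.sum_univ_two],
    by ext i j; fin_cases i <;> fin_cases j <;> simp [Matrix.mul_apply, Fin.sum_univ_two]⟩

theorem aux_comm_DU (t : R) : ⁅(auxD : GL (Fin 2) R), auxU t⁆ = auxE12 (-2 * t) := by
  rw [commutatorElement_def]
  ext i j
  show ((auxD : GL (Fin 2) R).val * (auxU t).val * ((auxD : GL (Fin 2) R)⁻¹).val *
    ((auxU t)⁻¹).val) i j = _
  fin_cases i <;> fin_cases j <;>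
    simp [auxD, auxU, auxE12, Matrix.mul_apply, Fin.sum_univ_two] <;> ring

theorem aux_comm_DL (t : R) : ⁅(auxD : GL (Fin 2) R), auxL t⁆ = auxE21 (2 * t) := by
  rw [commutatorElement_def]
  ext i j
  show ((auxD : GL (Fin 2) R).val * (auxL t).val * ((auxD : GL (Fin 2) R)⁻¹).val *
    ((auxL t)⁻¹).val) i j = _
  fin_cases i <;> fin_cases j <;>
    simp [auxD, auxL, auxE21, Matrix.mul_apply, Fin.sum_univ_two] <;> ring

theorem aux_det_DU (t : R) : Matrix.GeneralLinearGroup.det (auxD : GL (Fin 2) R) =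
    Matrix.GeneralLinearGroup.det (auxU t) := by
  ext
  show Matrix.det (auxD : GL (Fin 2) R).val = Matrix.det (auxU t).val
  simp [auxD, auxU, Matrix.det_fin_two]

theorem aux_det_DL (t : R) : Matrix.GeneralLinearGroup.det (auxD : GL (Fin 2) R) =
    Matrix.GeneralLinearGroup.det (auxL t) := by
  ext
  show Matrix.det (auxD : GL (Fin 2) R).val = Matrix.det (auxL t).val
  simp [auxD, auxL, Matrix.det_fin_two]

theorem aux_unit_case (C : Subgroup (GL (Fin 2) R))
    (h12 : ∀ t : R, auxE12 t ∈ C) (h21 : ∀ t : R, auxE21 t ∈ C)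
    (g : GL (Fin 2) R) (hdet : Matrix.det g.val = 1) (hc : IsUnit (g.val 1 0)) :
    g ∈ C := by
  obtain ⟨u, hu⟩ := hc
  have hui : g.val 1 0 * ↑u⁻¹ = 1 := by rw [← hu]; exact u.mul_inv
  have hd : g.val 0 0 * g.val 1 1 - g.val 0 1 * g.val 1 0 = 1 := by
    rw [← Matrix.det_fin_two]; exact hdet
  have key : g = auxE12 ((g.val 0 0 - 1) * ↑u⁻¹) * auxE21 (g.val 1 0) *
      auxE12 ((g.val 1 1 - 1) * ↑u⁻¹) := by
    ext i j
    show g.val i j = ((auxE12 ((g.val 0 0 - 1) * ↑u⁻¹)).val * (auxE21 (g.val 1 0)).val *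
      (auxE12 ((g.val 1 1 - 1) * ↑u⁻¹)).val) i j
    fin_cases i <;> fin_cases j <;>
      simp [auxE12, auxE21, Matrix.mul_apply, Fin.sum_univ_two]
    all_goals first
      | ring1
      | linear_combination (1 - g.val 0 0) * hui
      | linear_combination (1 - g.val 1 1) * hui
      | linear_combination (-(g.val 0 1 + (g.val 0 0 - 1) * (g.val 1 1 - 1) * (↑u⁻¹ : R))) * hui - (↑u⁻¹ : R) * hd
      | linear_combination (g.val 0 1 + (g.val 0 0 - 1) * (g.val 1 1 - 1) * (↑u⁻¹ : R)) * hui + (↑u⁻¹ : R) * hd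
      | linear_combination (g.val 0 1 - (g.val 0 0 - 1) * (g.val 1 1 - 1) * (↑u⁻¹ : R)) * hui - (↑u⁻¹ : R) * hd
      | linear_combination (-g.val 0 1 + (g.val 0 0 - 1) * (g.val 1 1 - 1) * (↑u⁻¹ : R)) * hui + (↑u⁻¹ : R) * hd
  rw [key]
  exact C.mul_mem (C.mul_mem (h12 _) (h21 _)) (h12 _)

theorem aux_gen_case [IsLocalRing R] (C : Subgroup (GL (Fin 2) R))
    (h12 : ∀ t : R, auxE12 t ∈ C) (h21 : ∀ t : R, auxE21 t ∈ C)
    (g : GL (Fin 2) R) (hdet : Matrix.det g.val = 1) : g ∈ C := by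
  by_cases hc : IsUnit (g.val 1 0)
  · exact aux_unit_case C h12 h21 g hdet hc
  · -- then the top-left entry is a unit
    have h1 : IsUnit (g.val 0 0 * g.val 1 1 + -(g.val 0 1 * g.val 1 0)) := by
      have : g.val 0 0 * g.val 1 1 + -(g.val 0 1 * g.val 1 0) = 1 := by
        rw [← sub_eq_add_neg, ← Matrix.det_fin_two]; exact hdet
      rw [this]; exact isUnit_one
    have ha : IsUnit (g.val 0 0) := by
      rcases IsLocalRing.isUnit_or_isUnit_of_isUnit_add h1 with h | h
      · exact isUnit_of_mul_isUnit_left h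
      · exact absurd (isUnit_of_mul_isUnit_right ((IsUnit.neg_iff _).mp h)) hc
    have hsum : IsUnit (g.val 0 0 + g.val 1 0) := by
      by_contra hns
      have : g.val 0 0 ∈ nonunits R := by
        have heq : g.val 0 0 = (g.val 0 0 + g.val 1 0) + -(g.val 1 0) := by ring
        rw [heq]
        exact IsLocalRing.nonunits_add hns (by rwa [mem_nonunits_iff, IsUnit.neg_iff])
      exact (mem_nonunits_iff.mp this) ha
    have hE : auxE21 (-1 : R) * auxE21 (1 : R) = 1 := by
      ext i j
      show ((auxE21 (-1 : R)).val * (auxE21 (1 : R)).val) i j = (1 : Matrix (Fin 2) (Fin 2) R) i j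
      fin_cases i <;> fin_cases j <;>
        simp [auxE21, Matrix.mul_apply, Fin.sum_univ_two]
    have hg' : (auxE21 (1 : R) * g).val 1 0 = g.val 0 0 + g.val 1 0 := by
      show ((auxE21 (1 : R)).val * g.val) 1 0 = _
      simp [auxE21, Matrix.mul_apply, Fin.sum_univ_two]
    have hd' : Matrix.det (auxE21 (1 : R) * g).val = 1 := by
      show Matrix.det ((auxE21 (1 : R)).val * g.val) = 1
      rw [Matrix.det_mul, hdet, mul_one]
      simp [auxE21, Matrix.det_fin_two]
    have hmem : auxE21 (1 : R) * g ∈ C :=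
      aux_unit_case C h12 h21 _ hd' (by rw [hg']; exact hsum)
    have : g = auxE21 (-1 : R) * (auxE21 (1 : R) * g) := by
      rw [← mul_assoc, hE, one_mul]
    rw [this]
    exact C.mul_mem (h21 _) hmem

theorem aux_closure_eq_ker [IsLocalRing R] (v : R) (hv : 2 * v = 1) :
    Subgroup.closure {x : GL (Fin 2) R |
        ∃ g₁ g₂ : GL (Fin 2) R,
          Matrix.GeneralLinearGroup.det g₁ = Matrix.GeneralLinearGroup.det g₂ ∧
          x = ⁅g₁, g₂⁆} =
      (Matrix.GeneralLinearGroup.det : GL (Fin 2) R →* Rˣ).ker := by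
  set S : Set (GL (Fin 2) R) := {x : GL (Fin 2) R |
        ∃ g₁ g₂ : GL (Fin 2) R,
          Matrix.GeneralLinearGroup.det g₁ = Matrix.GeneralLinearGroup.det g₂ ∧
          x = ⁅g₁, g₂⁆} with hS
  apply le_antisymm
  · rw [Subgroup.closure_le]
    rintro x ⟨g₁, g₂, hdet, rfl⟩
    show Matrix.GeneralLinearGroup.det ⁅g₁, g₂⁆ = 1
    rw [map_commutatorElement, hdet, commutatorElement_def]
    group
  · intro g hg
    have hdet : Matrix.det g.val = 1 := by
      have := congrArg Units.val hg
      rwa [Matrix.GeneralLinearGroup.val_det_apply] at this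
    refine aux_gen_case (Subgroup.closure S) (fun t => ?_) (fun t => ?_) g hdet
    · apply Subgroup.subset_closure
      refine ⟨auxD, auxU (-(v * t)), aux_det_DU _, ?_⟩
      rw [aux_comm_DU]
      congr 1
      linear_combination -t * hv
    · apply Subgroup.subset_closure
      refine ⟨auxD, auxL (v * t), aux_det_DL _, ?_⟩
      rw [aux_comm_DL]
      congr 1
      linear_combination -t * hv

theorem aux_two_unit : IsUnit (2 : ℤ_[3]) := by
  by_contra h
  have h1 : ‖(2 : ℤ_[3])‖ < 1 := PadicInt.not_isUnit_iff.mp h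
  have h2 : ((2 : ℤ) : ℤ_[3]) = 2 := by norm_num
  rw [← h2, PadicInt.norm_int_lt_one_iff_dvd] at h1
  norm_num at h1

theorem aux_det_continuous :
    Continuous (Matrix.GeneralLinearGroup.det : GL (Fin 2) ℤ_[3] → ℤ_[3]ˣ) := by
  rw [Units.continuous_iff]
  constructor
  · exact Units.continuous_val.matrix_det
  · have : (fun g : GL (Fin 2) ℤ_[3] => ((Matrix.GeneralLinearGroup.det g)⁻¹ : ℤ_[3]ˣ).val) =
        fun g : GL (Fin 2) ℤ_[3] => Matrix.det ((g⁻¹ : GL (Fin 2) ℤ_[3]) : Matrix (Fin 2) (Fin 2) ℤ_[3]) := by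
      funext g
      rw [← map_inv, Matrix.GeneralLinearGroup.val_det_apply]
    show Continuous fun g : GL (Fin 2) ℤ_[3] => ((Matrix.GeneralLinearGroup.det g)⁻¹ : ℤ_[3]ˣ).val
    rw [this]
    exact (Units.continuous_val.comp continuous_inv).matrix_det

end Aux

/-- The closed subgroup `C` of `SL(2, ℤ_3)` generated by the commutators
`g₁g₂g₁⁻¹g₂⁻¹` of pairs `g₁, g₂ ∈ GL(2, ℤ_3)` with `det g₁ = det g₂` is all of
`SL(2, ℤ_3)`; moreover the corresponding finite statement holds: the subgroup of
`SL(2, ℤ/3ℤ)` generated by commutators of equal-determinant pairs in `GL(2, ℤ/3ℤ)` is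
all of `SL(2, ℤ/3ℤ)`. -/
theorem stmt18 :
    Subgroup.topologicalClosure
        (Subgroup.closure {x : GL (Fin 2) ℤ_[3] |
          ∃ g₁ g₂ : GL (Fin 2) ℤ_[3],
            Matrix.GeneralLinearGroup.det g₁ = Matrix.GeneralLinearGroup.det g₂ ∧
            x = ⁅g₁, g₂⁆}) =
      (Matrix.GeneralLinearGroup.det : GL (Fin 2) ℤ_[3] →* ℤ_[3]ˣ).ker ∧
    Subgroup.closure {x : GL (Fin 2) (ZMod 3) |
          ∃ g₁ g₂ : GL (Fin 2) (ZMod 3),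
            Matrix.GeneralLinearGroup.det g₁ = Matrix.GeneralLinearGroup.det g₂ ∧
            x = ⁅g₁, g₂⁆} =
      (Matrix.GeneralLinearGroup.det : GL (Fin 2) (ZMod 3) →* (ZMod 3)ˣ).ker := by
  obtain ⟨u, hu⟩ := aux_two_unit
  constructor
  · rw [aux_closure_eq_ker (↑u⁻¹ : ℤ_[3]) (by rw [← hu]; exact u.mul_inv)]
    apply le_antisymm
    · apply Subgroup.topologicalClosure_minimal _ le_rfl
      have : ((Matrix.GeneralLinearGroup.det : GL (Fin 2) ℤ_[3] →* ℤ_[3]ˣ).ker : Set (GL (Fin 2) ℤ_[3])) =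
          (Matrix.GeneralLinearGroup.det : GL (Fin 2) ℤ_[3] → ℤ_[3]ˣ) ⁻¹' {1} := by
        ext x
        simp [MonoidHom.mem_ker]
      show IsClosed ((Matrix.GeneralLinearGroup.det : GL (Fin 2) ℤ_[3] →* ℤ_[3]ˣ).ker : Set (GL (Fin 2) ℤ_[3]))
      rw [this]
      exact isClosed_singleton.preimage aux_det_continuous
    · exact Subgroup.le_topologicalClosure _
  · exact aux_closure_eq_ker (2 : ZMod 3) (by decide)
end
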